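/- Let N = p^n M with p prime not dividing M and n ≥ 2, and let 1 ≤ r ≤ n. Define the operator S_{p^n,r} on S_{2k}(Γ_0(N)) by S_{p^n,r}(f) = f + Σ_{j=r}^{n-1} Σ_{s ∈ (Z/p^{n-j}Z)^*} f|_{2k} A_{s,j}, where A_{s,j} = [[a_{s,j}, b_{s,j}],[p^j M, p^{n-j} − sM]] ∈ SL_2(Z). Then S_{p^n,r} maps S_{2k}(Γ_0(N)) into S_{2k}(Γ_0(p^r M)), it satisfies S_{p^n,r}(S_{p^n,r} − p^{n-r}) = 0, and its p^{n-r}-eigenspace is exactly the subspace S_{2k}(Γ_0(p^r M)) (on which it acts as multiplication by p^{n-r}). -/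

import Mathlib

/-!
The matrices `A_{s,j}` (`r ≤ j < n`) together with the identity form a system of representatives
of `Γ₀(pⁿM) \ Γ₀(p^r M)`. Indeed, `g * h⁻¹ ∈ Γ₀(N)` only depends on the bottom rows `(c, d)`,
`(c', d')` of `g, h`, through `N ∣ c d' - d c'`. A primitive row `(c, d)` with `p^r M ∣ c` is
equivalent to the row `(p^j M, p^{n-j} - s M)` where `j` is the `p`-adic valuation of `c` capped
at `n` and `s` solves a linear congruence modulo `p^{n-j}`, and two of these rows are equivalent
only if they are equal, by comparing `p`-adic valuations.

Hence on `ℍ`, for `f` of level `pⁿM`, `S_{pⁿ,r} f` is the trace `∑ f ∣ A_{s,j}` to level `p^r M`: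
right multiplication by `γ ∈ Γ₀(p^r M)` permutes the cosets, so the trace is `Γ₀(p^r M)`-invariant.
On forms of level `p^r M` every term is `f`, and there are `∑_{i ≤ n-r} φ(p^i) = p^{n-r}` terms.
-/

open Complex Filter

/-- The upper half plane, as a subset of `ℂ`. -/
def UHP : Set ℂ := {z : ℂ | 0 < z.im}

/-- The weight-`2k` slash operator for an integer matrix `[[a,b],[c,d]]` of
positive determinant: `(f ∣[2k] g)(z) = det(g)^k (cz+d)^{-2k} f((az+b)/(cz+d))`. -/
noncomputable def slash2k (k : ℕ) (a b c d : ℤ) (f : ℂ → ℂ) : ℂ → ℂ :=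
  fun z => ((a * d - b * c : ℤ) : ℂ) ^ k * ((c : ℂ) * z + d) ^ (-(2 * k : ℤ)) *
    f (((a : ℂ) * z + b) / ((c : ℂ) * z + d))

/-- `f : ℂ → ℂ` (restricted to the upper half plane) is a cusp form of weight
`2k` for `Γ₀(N)`: holomorphic on `ℍ`, slash-invariant under `Γ₀(N)`, and
vanishing at all cusps. -/
structure IsCuspForm (N k : ℕ) (f : ℂ → ℂ) : Prop where
  holo : DifferentiableOn ℂ f UHP
  slash_inv : ∀ a b c d : ℤ, a * d - b * c = 1 → (N : ℤ) ∣ c →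
    ∀ z ∈ UHP, f (((a : ℂ) * z + b) / ((c : ℂ) * z + d)) =
      ((c : ℂ) * z + d) ^ (2 * k) * f z
  zero_at_cusps : ∀ a b c d : ℤ, a * d - b * c = 1 →
    Tendsto (fun y : ℝ => slash2k k a b c d f (y * Complex.I)) atTop (nhds 0)

/-- `Ũ_p(f)(z) = p^{-k} Σ_{s=0}^{p-1} f((z+s)/p)`. -/
noncomputable def Utilde (p k : ℕ) (f : ℂ → ℂ) : ℂ → ℂ :=
  fun z => ((p : ℂ) ^ k)⁻¹ * ∑ s ∈ Finset.range p, f ((z + s) / p)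

/-- The operator `S_{pⁿ,r}`:
`S_{pⁿ,r}(f) = f + Σ_{j=r}^{n-1} Σ_{s ∈ (ℤ/p^{n-j}ℤ)^*} f ∣[2k] A_{s,j}`, where
`A_{s,j} = [[a_{s,j}, b_{s,j}],[p^j M, p^{n-j} - sM]] ∈ SL₂(ℤ)` and
`A j s = (a_{s,j}, b_{s,j})` records the chosen top rows. -/
noncomputable def Sop (p n M k r : ℕ) (A : ℕ → ℕ → ℤ × ℤ) (f : ℂ → ℂ) : ℂ → ℂ :=
  fun z => f z + ∑ j ∈ Finset.Icc r (n - 1),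
    ∑ s ∈ (Finset.range (p ^ (n - j))).filter (fun s => ¬ p ∣ s),
      slash2k k (A j s).1 (A j s).2 ((p : ℤ) ^ j * M) ((p : ℤ) ^ (n - j) - s * M) f z

open UpperHalfPlane ModularForm CongruenceSubgroup
open scoped MatrixGroups Manifold

lemma exists_pow_dvd_not_dvd_succ {α : Type*} [Monoid α] {q c : α} {r n : ℕ} (hr : r ≤ n)
    (hc : q ^ r ∣ c) (hn : ¬ q ^ n ∣ c) :
    ∃ j, r ≤ j ∧ j < n ∧ q ^ j ∣ c ∧ ¬ q ^ (j + 1) ∣ c := by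
  classical
  let P : ℕ → Prop := fun j => q ^ j ∣ c
  have hj : P (Nat.findGreatest P n) := Nat.findGreatest_spec (P := P) hr hc
  have hjn : Nat.findGreatest P n < n :=
    (Nat.findGreatest_le n).lt_of_ne fun h => hn (h ▸ hj)
  exact ⟨_, Nat.le_findGreatest (P := P) hr hc, hjn, hj,
    Nat.findGreatest_is_greatest (Nat.lt_succ_self _) hjn⟩

lemma eq_of_pow_dvd_pow_mul_sub_pow_mul {α : Type*} [CommRing α] [IsDomain α] {q u v : α}
    (hq : Prime q) {n i j : ℕ} (hi : i ≤ n) (hj : j ≤ n) (hu : ¬ q ∣ u) (hv : ¬ q ∣ v)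
    (h : q ^ n ∣ q ^ i * u - q ^ j * v) : i = j := by
  have key : ∀ {i j u v}, i < j → j ≤ n → ¬ q ∣ u → ¬ q ^ n ∣ q ^ i * u - q ^ j * v := by
    intro i j u v hij hj hu h
    have hdvd : q ^ (i + 1) ∣ q ^ i * u :=
      (sub_add_cancel (q ^ i * u) (q ^ j * v)) ▸
        dvd_add ((pow_dvd_pow q (by omega)).trans h) ((pow_dvd_pow q hij).mul_right v)
    rw [pow_succ] at hdvd
    exact hu ((mul_dvd_mul_iff_left (pow_ne_zero i hq.ne_zero)).mp hdvd)
  rcases lt_trichotomy i j with hij | hij | hij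
  · exact (key hij hj hu h).elim
  · exact hij
  · exact (key hij hi hv (dvd_sub_comm.mp h)).elim

lemma exists_lt_dvd_add_mul {q : ℕ} (hq : 0 < q) {a b : ℤ} (h : IsCoprime (q : ℤ) b) :
    ∃ s : ℕ, s < q ∧ (q : ℤ) ∣ a + s * b := by
  obtain ⟨u, v, huv⟩ := h
  have hq' : (0 : ℤ) < q := by exact_mod_cast hq
  have hlt := Int.emod_lt_of_pos (-a * v) hq'
  refine ⟨((-a * v) % q).toNat, by omega, ?_⟩
  rw [Int.toNat_of_nonneg (Int.emod_nonneg _ hq'.ne')]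
  exact ⟨a * u - (-a * v) / q * b,
    by linear_combination b * Int.emod_add_mul_ediv (-a * v) q - a * huv⟩

lemma sum_comp_mul_eq_of_cosetReps {G ι β : Type*} [Group G] [AddCommMonoid β]
    (H : Subgroup G) {s : Finset ι} (B : ι → G) (φ : G → β)
    (hφ : ∀ h ∈ H, ∀ g, φ (h * g) = φ g) (hinj : ∀ i ∈ s, ∀ j ∈ s, B i * (B j)⁻¹ ∈ H → i = j)
    {γ : G} (hex : ∀ i ∈ s, ∃ j ∈ s, B i * γ * (B j)⁻¹ ∈ H) :
    ∑ i ∈ s, φ (B i * γ) = ∑ i ∈ s, φ (B i) := by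
  choose σ hσs hσH using hex
  have hσinj : ∀ i hi j hj, σ i hi = σ j hj → i = j := by
    intro i hi j hj hij
    refine hinj i hi j hj ?_
    have h : B i * (B j)⁻¹ =
        B i * γ * (B (σ i hi))⁻¹ * (B j * γ * (B (σ j hj))⁻¹)⁻¹ := by
      rw [hij]; group
    exact h ▸ H.mul_mem (hσH i hi) (H.inv_mem (hσH j hj))
  refine Finset.sum_bij σ hσs hσinj (fun j hj => ?_) fun i hi => ?_
  · obtain ⟨i, hi, h⟩ := Finset.surj_on_of_inj_on_of_card_le σ hσs
      (fun a b ha hb => hσinj a ha b hb) le_rfl j hj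
    exact ⟨i, hi, h.symm⟩
  · rw [← hφ _ (hσH i hi) (B (σ i hi)), inv_mul_cancel_right]

lemma det_SL2 (g : SL(2, ℤ)) : g 0 0 * g 1 1 - g 0 1 * g 1 0 = 1 := by
  rw [← Matrix.det_fin_two]
  exact g.det_coe

def toSL2 (a b c d : ℤ) (h : a * d - b * c = 1) : SL(2, ℤ) :=
  ⟨!![a, b; c, d], by rwa [Matrix.det_fin_two_of]⟩

lemma mem_Gamma0_iff_dvd {N : ℕ} {g : SL(2, ℤ)} : g ∈ Gamma0 N ↔ (N : ℤ) ∣ g 1 0 := by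
  rw [Gamma0_mem, ZMod.intCast_zmod_eq_zero_iff_dvd]

lemma mul_inv_mem_Gamma0_iff {N : ℕ} {g h : SL(2, ℤ)} :
    g * h⁻¹ ∈ Gamma0 N ↔ (N : ℤ) ∣ g 1 0 * h 1 1 - g 1 1 * h 1 0 := by
  rw [mem_Gamma0_iff_dvd, Matrix.SpecialLinearGroup.coe_mul, Matrix.SpecialLinearGroup.coe_inv,
    Matrix.adjugate_fin_two, Matrix.mul_apply]
  simp [Fin.sum_univ_two, sub_eq_add_neg]

lemma slash2k_eq_slash (k : ℕ) (g : SL(2, ℤ)) (f : ℂ → ℂ) (τ : ℍ) :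
    slash2k k (g 0 0) (g 0 1) (g 1 0) (g 1 1) f τ = ((f ∘ (↑)) ∣[(2 * k : ℤ)] g) τ := by
  rw [SL_slash_apply, slash2k, det_SL2, Function.comp_apply, coe_specialLinearGroup_apply]
  simp [denom]
  ring

lemma slash2k_eq_slash_toSL2 (k : ℕ) {a b c d : ℤ} (h : a * d - b * c = 1) (f : ℂ → ℂ)
    (τ : ℍ) : slash2k k a b c d f τ = ((f ∘ (↑)) ∣[(2 * k : ℤ)] toSL2 a b c d h) τ := by
  rw [← slash2k_eq_slash]
  simp [toSL2]

lemma denom_ne_zero_of_det {a b c d : ℤ} (h : a * d - b * c = 1) (τ : ℍ) :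
    (c : ℂ) * τ + d ≠ 0 := by
  have := denom_ne_zero (toSL2 a b c d h) τ
  rw [ModularGroup.denom_apply] at this
  simpa [toSL2] using this

lemma slash2k_eq_self_iff {k : ℕ} {a b c d : ℤ} (h : a * d - b * c = 1) {f : ℂ → ℂ} (τ : ℍ) :
    slash2k k a b c d f τ = f τ ↔
      f (((a : ℂ) * τ + b) / ((c : ℂ) * τ + d)) = ((c : ℂ) * τ + d) ^ (2 * k) * f τ := by
  have hden := zpow_ne_zero (2 * k : ℤ) (denom_ne_zero_of_det h τ)
  rw [slash2k, h, Int.cast_one, one_pow, one_mul, zpow_neg, inv_mul_eq_iff_eq_mul₀ hden]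
  norm_cast

lemma slash_eq_self_iff {N k : ℕ} {f : ℂ → ℂ} :
    (∀ g ∈ Gamma0 N, (f ∘ (↑) : ℍ → ℂ) ∣[(2 * k : ℤ)] g = f ∘ (↑)) ↔
      ∀ a b c d : ℤ, a * d - b * c = 1 → (N : ℤ) ∣ c → ∀ z ∈ UHP,
        f (((a : ℂ) * z + b) / ((c : ℂ) * z + d)) = ((c : ℂ) * z + d) ^ (2 * k) * f z := by
  refine ⟨fun hf a b c d h hc z hz => ?_, fun hf g hg => funext fun τ => ?_⟩
  · have hg : toSL2 a b c d h ∈ Gamma0 N := mem_Gamma0_iff_dvd.mpr (by simpa [toSL2] using hc)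
    have hz' : 0 < z.im := hz
    have := congrFun (hf _ hg) ⟨z, hz'⟩
    rwa [← slash2k_eq_slash_toSL2, Function.comp_apply, slash2k_eq_self_iff h] at this
  · rw [← slash2k_eq_slash, Function.comp_apply, slash2k_eq_self_iff (det_SL2 g)]
    exact hf _ _ _ _ (det_SL2 g) (mem_Gamma0_iff_dvd.mp hg) τ τ.2

lemma mdifferentiable_comp_coe_iff {f : ℂ → ℂ} :
    MDifferentiable 𝓘(ℂ) 𝓘(ℂ) (f ∘ (↑) : ℍ → ℂ) ↔ DifferentiableOn ℂ f UHP := by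
  rw [mdifferentiable_iff]
  exact differentiableOn_congr fun z hz => by simp [ofComplex_apply_of_im_pos hz]

namespace IsCuspForm

variable {N k : ℕ} {f g : ℂ → ℂ}

lemma slash_eq (hf : IsCuspForm N k f) {γ : SL(2, ℤ)} (hγ : γ ∈ Gamma0 N) :
    (f ∘ (↑) : ℍ → ℂ) ∣[(2 * k : ℤ)] γ = f ∘ (↑) :=
  slash_eq_self_iff.mpr hf.slash_inv γ hγ

lemma tendsto_slash2k (hf : IsCuspForm N k f) (γ : SL(2, ℤ)) :
    Tendsto (fun y : ℝ => slash2k k (γ 0 0) (γ 0 1) (γ 1 0) (γ 1 1) f (y * Complex.I))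
      atTop (nhds 0) :=
  hf.zero_at_cusps _ _ _ _ (det_SL2 γ)

lemma mono {N' : ℕ} (hf : IsCuspForm N k f) (hN : N ∣ N') : IsCuspForm N' k f where
  holo := hf.holo
  slash_inv a b c d h hc := hf.slash_inv a b c d h ((Int.natCast_dvd_natCast.mpr hN).trans hc)
  zero_at_cusps := hf.zero_at_cusps

lemma congr (hg : IsCuspForm N k g) (hfg : (f ∘ (↑) : ℍ → ℂ) = g ∘ (↑)) :
    IsCuspForm N k f where
  holo := mdifferentiable_comp_coe_iff.mp (hfg ▸ mdifferentiable_comp_coe_iff.mpr hg.holo)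
  slash_inv := slash_eq_self_iff.mp (hfg ▸ slash_eq_self_iff.mpr hg.slash_inv)
  zero_at_cusps a b c d h := by
    refine (hg.zero_at_cusps a b c d h).congr' ?_
    filter_upwards [eventually_gt_atTop 0] with y hy
    let τ : ℍ := ⟨y * Complex.I, by simpa using hy⟩
    change slash2k k a b c d g τ = slash2k k a b c d f τ
    rw [slash2k_eq_slash_toSL2 k h, slash2k_eq_slash_toSL2 k h, hfg]

lemma const_mul (hg : IsCuspForm N k g) (w : ℂ) : IsCuspForm N k (fun z => w * g z) where
  holo := hg.holo.const_mul w
  slash_inv a b c d h hc z hz := by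
    rw [hg.slash_inv a b c d h hc z hz, mul_left_comm]
  zero_at_cusps a b c d h := by
    simpa [slash2k, mul_left_comm] using (hg.zero_at_cusps a b c d h).const_mul w

end IsCuspForm

section Cosets

variable {p n M r : ℕ}

/-- For `j = n` the only index is `s = 0` (as `Nat.Coprime 1 0`); it labels the trivial coset. -/
def cosetIndex (p n r : ℕ) : Finset (Σ _ : ℕ, ℕ) :=
  (Finset.Icc r n).sigma fun j => (Finset.range (p ^ (n - j))).filter (p ^ (n - j)).Coprime

lemma mem_cosetIndex {x : Σ _ : ℕ, ℕ} : x ∈ cosetIndex p n r ↔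
    r ≤ x.1 ∧ x.1 ≤ n ∧ x.2 < p ^ (n - x.1) ∧ (p ^ (n - x.1)).Coprime x.2 := by
  simp [cosetIndex, and_assoc]

open Nat in
lemma card_cosetIndex (hp : p.Prime) (hr : r ≤ n) : (cosetIndex p n r).card = p ^ (n - r) := by
  rw [cosetIndex, Finset.card_sigma]
  calc ∑ j ∈ Finset.Icc r n, φ (p ^ (n - j))
      = ∑ i ∈ Finset.range (n - r + 1), φ (p ^ i) := by
        refine Finset.sum_nbij' (n - ·) (n - ·) ?_ ?_ ?_ ?_ fun _ _ => rfl <;>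
          intro i hi <;> simp only [Finset.mem_Icc, Finset.mem_range] at hi ⊢ <;> omega
    _ = p ^ (n - r) := by rw [← Nat.sum_divisors_prime_pow hp, Nat.sum_totient]

lemma not_dvd_pow_sub_mul_of_mem_cosetIndex (hp : p.Prime) (hpM : ¬ p ∣ M) {x : Σ _ : ℕ, ℕ}
    (hx : x ∈ cosetIndex p n r) : ¬ (p : ℤ) ∣ (p : ℤ) ^ (n - x.1) - x.2 * M := by
  obtain ⟨-, -, hs, hcop⟩ := mem_cosetIndex.mp hx
  rcases Nat.eq_zero_or_pos (n - x.1) with hm | hm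
  · rw [hm, pow_zero, Nat.lt_one_iff] at hs
    simpa [hm, hs] using (Nat.prime_iff_prime_int.mp hp).not_dvd_one
  · have hps : ¬ p ∣ x.2 :=
      hp.coprime_iff_not_dvd.mp (hcop.coprime_dvd_left (dvd_pow_self p hm.ne'))
    intro hd
    have : (p : ℤ) ∣ x.2 * M := (dvd_sub_right (dvd_pow_self _ hm.ne')).mp hd
    exact (Int.Prime.dvd_mul' hp this).elim (fun h => hps (by exact_mod_cast h))
      fun h => hpM (by exact_mod_cast h)

lemma eq_of_dvd_cross (hp : p.Prime) (hpM : ¬ p ∣ M) {x y : Σ _ : ℕ, ℕ}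
    (hx : x ∈ cosetIndex p n r) (hy : y ∈ cosetIndex p n r)
    (h : (p : ℤ) ^ n * M ∣ (p : ℤ) ^ x.1 * M * ((p : ℤ) ^ (n - y.1) - y.2 * M) -
      ((p : ℤ) ^ (n - x.1) - x.2 * M) * ((p : ℤ) ^ y.1 * M)) : x = y := by
  have hpZ : Prime (p : ℤ) := Nat.prime_iff_prime_int.mp hp
  have hpM' : IsCoprime (p : ℤ) M :=
    Nat.isCoprime_iff_coprime.mpr (hp.coprime_iff_not_dvd.mpr hpM)
  have hMd : ∀ z ∈ cosetIndex p n r, ¬ (p : ℤ) ∣ M * ((p : ℤ) ^ (n - z.1) - z.2 * M) :=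
    fun z hz hd => (hpZ.dvd_or_dvd hd).elim (fun h => hpM (by exact_mod_cast h))
      (not_dvd_pow_sub_mul_of_mem_cosetIndex hp hpM hz)
  have hj : x.1 = y.1 := by
    refine eq_of_pow_dvd_pow_mul_sub_pow_mul hpZ (mem_cosetIndex.mp hx).2.1
      (mem_cosetIndex.mp hy).2.1 (hMd y hy) (hMd x hx) ((dvd_mul_right _ _).trans (h.trans ?_))
    exact dvd_of_eq (by ring)
  obtain ⟨j, s⟩ := x
  obtain ⟨j', s'⟩ := y
  obtain rfl : j = j' := hj
  rw [mem_cosetIndex] at hx hy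
  have hsplit : (p : ℤ) ^ n * M = (p : ℤ) ^ j * ((p : ℤ) ^ (n - j) * M) := by
    rw [← mul_assoc, ← pow_add, Nat.add_sub_cancel' hx.2.1]
  have hcross : (p : ℤ) ^ j * M * ((p : ℤ) ^ (n - j) - s' * M) -
      ((p : ℤ) ^ (n - j) - s * M) * ((p : ℤ) ^ j * M) = (p : ℤ) ^ j * (M * M * (s - s')) := by
    ring
  rw [hsplit, hcross, mul_dvd_mul_iff_left (pow_ne_zero _ hpZ.ne_zero)] at h
  have hss : s' ≡ s [MOD p ^ (n - j)] := by
    rw [Nat.modEq_iff_dvd]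
    push_cast
    exact (hpM'.mul_right hpM').pow_left.dvd_of_dvd_mul_left ((dvd_mul_right _ _).trans h)
  rw [hss.eq_of_lt_of_lt hy.2.2.1 hx.2.2.1]

lemma exists_dvd_cross (hp : p.Prime) (hpM : ¬ p ∣ M) (hr1 : 1 ≤ r) (hr2 : r ≤ n) {c d : ℤ}
    (hc : (p : ℤ) ^ r * M ∣ c) (hcd : IsCoprime c d) :
    ∃ y ∈ cosetIndex p n r, (p : ℤ) ^ n * M ∣
      c * ((p : ℤ) ^ (n - y.1) - y.2 * M) - d * ((p : ℤ) ^ y.1 * M) := by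
  have hpZ : Prime (p : ℤ) := Nat.prime_iff_prime_int.mp hp
  have hpM' : IsCoprime (p : ℤ) M :=
    Nat.isCoprime_iff_coprime.mpr (hp.coprime_iff_not_dvd.mpr hpM)
  have hMc : (M : ℤ) ∣ c := (dvd_mul_left _ _).trans hc
  by_cases hn : (p : ℤ) ^ n ∣ c
  · refine ⟨⟨n, 0⟩, mem_cosetIndex.mpr ⟨hr2, le_rfl, by simp, by simp⟩, ?_⟩
    simp only [Nat.sub_self, pow_zero, Nat.cast_zero, zero_mul, sub_zero, mul_one]
    exact dvd_sub (hpM'.pow_left.mul_dvd hn hMc) (dvd_mul_left _ _)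
  obtain ⟨j, hrj, hjn, hj, hj1⟩ :=
    exists_pow_dvd_not_dvd_succ hr2 ((dvd_mul_right _ _).trans hc) hn
  obtain ⟨m, rfl⟩ := hpM'.pow_left.mul_dvd hj hMc
  have hpm : ¬ (p : ℤ) ∣ m := fun h =>
    hj1 (by rw [pow_succ, mul_assoc]; exact mul_dvd_mul_left _ (h.mul_left _))
  have hpd : ¬ (p : ℤ) ∣ d := fun h => hpZ.not_isUnit <| hcd.isUnit_of_dvd'
    ((dvd_pow_self _ (by omega)).mul_right _ |>.mul_right _) h
  obtain ⟨s, hs, hsd⟩ := exists_lt_dvd_add_mul (q := p ^ (n - j)) (a := d) (b := M * m)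
    (pow_pos hp.pos _)
    (by push_cast; exact (hpM'.mul_right (hpZ.coprime_iff_not_dvd.mpr hpm)).pow_left)
  push_cast at hsd
  have hps : ¬ p ∣ s := fun h => hpd <|
    (dvd_add_left ((Int.natCast_dvd_natCast.mpr h).mul_right _)).mp
      ((dvd_pow_self _ (by omega)).trans hsd)
  refine ⟨⟨j, s⟩, mem_cosetIndex.mpr
    ⟨hrj, hjn.le, hs, (hp.coprime_iff_not_dvd.mpr hps).pow_left _⟩, ?_⟩
  have hsplit : (p : ℤ) ^ n = (p : ℤ) ^ j * (p : ℤ) ^ (n - j) := by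
    rw [← pow_add, Nat.add_sub_cancel' hjn.le]
  have hcross : (p : ℤ) ^ j * M * m * ((p : ℤ) ^ (n - j) - s * M) - d * ((p : ℤ) ^ j * M) =
      (p : ℤ) ^ n * M * m - (p : ℤ) ^ j * M * (d + s * (M * m)) := by
    rw [hsplit]; ring
  rw [hcross, hsplit, mul_right_comm _ _ (M : ℤ)]
  exact dvd_sub (dvd_mul_right _ _) (mul_dvd_mul_left _ hsd)

end Cosets

section Sop

variable {p n M k r : ℕ} {A : ℕ → ℕ → ℤ × ℤ} {f : ℂ → ℂ}

def TopRowsDetOne (p n M r : ℕ) (A : ℕ → ℕ → ℤ × ℤ) : Prop :=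
  ∀ j s : ℕ, r ≤ j → j ≤ n - 1 → s < p ^ (n - j) → ¬ p ∣ s →
    (A j s).1 * ((p : ℤ) ^ (n - j) - s * M) - (A j s).2 * ((p : ℤ) ^ j * M) = 1

def cosetTop (A : ℕ → ℕ → ℤ × ℤ) (n : ℕ) (x : Σ _ : ℕ, ℕ) : ℤ × ℤ :=
  if x.1 = n then (1, 0) else A x.1 x.2

/-- `A_{s,j}` for `x = ⟨j, s⟩`, `j < n`, and `[[1, 0], [pⁿM, 1]]` for `x = ⟨n, 0⟩`;
the junk value `1` is never taken on `cosetIndex p n r`. -/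
def cosetRep (A : ℕ → ℕ → ℤ × ℤ) (p n M : ℕ) (x : Σ _ : ℕ, ℕ) : SL(2, ℤ) :=
  if h : (cosetTop A n x).1 * ((p : ℤ) ^ (n - x.1) - x.2 * M) -
      (cosetTop A n x).2 * ((p : ℤ) ^ x.1 * M) = 1
  then toSL2 _ _ _ _ h else 1

lemma det_cosetTop (hp : p.Prime) (hA : TopRowsDetOne p n M r A) {x : Σ _ : ℕ, ℕ}
    (hx : x ∈ cosetIndex p n r) :
    (cosetTop A n x).1 * ((p : ℤ) ^ (n - x.1) - x.2 * M) -
      (cosetTop A n x).2 * ((p : ℤ) ^ x.1 * M) = 1 := by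
  obtain ⟨hrj, hjn, hs, hcop⟩ := mem_cosetIndex.mp hx
  rw [cosetTop]
  split_ifs with hj
  · rw [hj, Nat.sub_self, pow_zero, Nat.lt_one_iff] at hs
    simp [hj, hs]
  · refine hA _ _ hrj (by omega) hs fun hps => hp.one_lt.ne' ?_
    exact (hcop.coprime_dvd_left (dvd_pow_self p (by omega))).eq_one_of_dvd hps

lemma cosetRep_of_mem (hp : p.Prime) (hA : TopRowsDetOne p n M r A) {x : Σ _ : ℕ, ℕ}
    (hx : x ∈ cosetIndex p n r) : cosetRep A p n M x = toSL2 _ _ _ _ (det_cosetTop hp hA hx) :=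
  dif_pos _

lemma cosetRep_apply_one (hp : p.Prime) (hA : TopRowsDetOne p n M r A) {x : Σ _ : ℕ, ℕ}
    (hx : x ∈ cosetIndex p n r) :
    cosetRep A p n M x 1 0 = (p : ℤ) ^ x.1 * M ∧
      cosetRep A p n M x 1 1 = (p : ℤ) ^ (n - x.1) - x.2 * M := by
  simp [cosetRep_of_mem hp hA hx, toSL2]

lemma cosetRep_mem_Gamma0 (hp : p.Prime) (hA : TopRowsDetOne p n M r A) {x : Σ _ : ℕ, ℕ}
    (hx : x ∈ cosetIndex p n r) : cosetRep A p n M x ∈ Gamma0 (p ^ r * M) := by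
  rw [mem_Gamma0_iff_dvd, (cosetRep_apply_one hp hA hx).1]
  push_cast
  exact mul_dvd_mul_right (pow_dvd_pow _ (mem_cosetIndex.mp hx).1) _

lemma eq_of_cosetRep_mul_inv_mem (hp : p.Prime) (hpM : ¬ p ∣ M) (hA : TopRowsDetOne p n M r A)
    {x y : Σ _ : ℕ, ℕ} (hx : x ∈ cosetIndex p n r) (hy : y ∈ cosetIndex p n r)
    (h : cosetRep A p n M x * (cosetRep A p n M y)⁻¹ ∈ Gamma0 (p ^ n * M)) : x = y := by
  rw [mul_inv_mem_Gamma0_iff, (cosetRep_apply_one hp hA hx).1, (cosetRep_apply_one hp hA hx).2,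
    (cosetRep_apply_one hp hA hy).1, (cosetRep_apply_one hp hA hy).2] at h
  push_cast at h
  exact eq_of_dvd_cross hp hpM hx hy h

lemma exists_mul_inv_cosetRep_mem (hp : p.Prime) (hpM : ¬ p ∣ M) (hr1 : 1 ≤ r) (hr2 : r ≤ n)
    (hA : TopRowsDetOne p n M r A) {g : SL(2, ℤ)} (hg : g ∈ Gamma0 (p ^ r * M)) :
    ∃ y ∈ cosetIndex p n r, g * (cosetRep A p n M y)⁻¹ ∈ Gamma0 (p ^ n * M) := by
  have hc : (p : ℤ) ^ r * M ∣ g 1 0 := by exact_mod_cast mem_Gamma0_iff_dvd.mp hg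
  obtain ⟨y, hy, h⟩ := exists_dvd_cross hp hpM hr1 hr2 hc (d := g 1 1)
    ⟨-g 0 1, g 0 0, by linear_combination det_SL2 g⟩
  refine ⟨y, hy, ?_⟩
  rw [mul_inv_mem_Gamma0_iff, (cosetRep_apply_one hp hA hy).1, (cosetRep_apply_one hp hA hy).2]
  exact_mod_cast h

lemma sum_slash_cosetRep_mul (hp : p.Prime) (hpM : ¬ p ∣ M) (hr1 : 1 ≤ r) (hr2 : r ≤ n)
    (hA : TopRowsDetOne p n M r A) (hf : IsCuspForm (p ^ n * M) k f) {γ : SL(2, ℤ)}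
    (hγ : γ ∈ Gamma0 (p ^ r * M)) :
    ∑ x ∈ cosetIndex p n r, (f ∘ (↑) : ℍ → ℂ) ∣[(2 * k : ℤ)] (cosetRep A p n M x * γ) =
      ∑ x ∈ cosetIndex p n r, (f ∘ (↑) : ℍ → ℂ) ∣[(2 * k : ℤ)] cosetRep A p n M x :=
  sum_comp_mul_eq_of_cosetReps (Gamma0 (p ^ n * M)) (cosetRep A p n M)
    ((f ∘ (↑) : ℍ → ℂ) ∣[(2 * k : ℤ)] ·)
    (fun h hh g => by rw [SlashAction.slash_mul, hf.slash_eq hh])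
    (fun x hx y hy => eq_of_cosetRep_mul_inv_mem hp hpM hA hx hy)
    fun x hx => exists_mul_inv_cosetRep_mem hp hpM hr1 hr2 hA
      (mul_mem (cosetRep_mem_Gamma0 hp hA hx) hγ)

lemma Sop_comp_coe (hp : p.Prime) (hr1 : 1 ≤ r) (hr2 : r ≤ n) (hA : TopRowsDetOne p n M r A)
    (hf : IsCuspForm (p ^ n * M) k f) :
    (Sop p n M k r A f ∘ (↑) : ℍ → ℂ) =
      ∑ x ∈ cosetIndex p n r, (f ∘ (↑) : ℍ → ℂ) ∣[(2 * k : ℤ)] cosetRep A p n M x := by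
  obtain ⟨m, rfl⟩ : ∃ m, n = m + 1 := ⟨n - 1, by omega⟩
  ext τ
  have hterm : ∀ x ∈ cosetIndex p (m + 1) r,
      ((f ∘ (↑) : ℍ → ℂ) ∣[(2 * k : ℤ)] cosetRep A p (m + 1) M x) τ =
        slash2k k (cosetTop A (m + 1) x).1 (cosetTop A (m + 1) x).2 ((p : ℤ) ^ x.1 * M)
          ((p : ℤ) ^ (m + 1 - x.1) - x.2 * M) f τ := by
    intro x hx
    rw [← slash2k_eq_slash, cosetRep_of_mem hp hA hx]
    simp [toSL2]
  rw [Finset.sum_apply, Finset.sum_congr rfl hterm, cosetIndex, Finset.sum_sigma,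
    Finset.sum_Icc_succ_top (by omega), Function.comp_apply, Sop, Nat.add_sub_cancel,
    add_comm (f _)]
  congr 1
  · refine Finset.sum_congr rfl fun j hj => ?_
    have hjm : j ≤ m := (Finset.mem_Icc.mp hj).2
    refine Finset.sum_congr (Finset.filter_congr fun s _ => ?_) fun s _ => by
      simp [cosetTop, show j ≠ m + 1 by omega]
    rw [Nat.coprime_pow_left_iff (by omega), hp.coprime_iff_not_dvd]
  · have hdet : (1 : ℤ) * 1 - 0 * ((p : ℤ) ^ (m + 1) * M) = 1 := by ring
    have hc : ((p ^ (m + 1) * M : ℕ) : ℤ) ∣ (p : ℤ) ^ (m + 1) * M := by push_cast; rfl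
    simpa [cosetTop] using
      ((slash2k_eq_self_iff hdet τ).mpr (hf.slash_inv _ _ _ _ hdet hc τ τ.2)).symm

lemma isCuspForm_Sop (hp : p.Prime) (hpM : ¬ p ∣ M) (hr1 : 1 ≤ r) (hr2 : r ≤ n)
    (hA : TopRowsDetOne p n M r A) (hf : IsCuspForm (p ^ n * M) k f) :
    IsCuspForm (p ^ r * M) k (Sop p n M k r A f) where
  holo := by
    rw [← mdifferentiable_comp_coe_iff, Sop_comp_coe hp hr1 hr2 hA hf]
    exact MDifferentiable.sum fun x _ => (mdifferentiable_comp_coe_iff.mpr hf.holo).slash _ _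
  slash_inv := by
    refine slash_eq_self_iff.mp fun γ hγ => ?_
    rw [Sop_comp_coe hp hr1 hr2 hA hf, SlashAction.sum_slash]
    simp_rw [← SlashAction.slash_mul]
    exact sum_slash_cosetRep_mul hp hpM hr1 hr2 hA hf hγ
  zero_at_cusps a b c d h := by
    have hsum := tendsto_finsetSum (cosetIndex p n r) fun x _ =>
      hf.tendsto_slash2k (cosetRep A p n M x * toSL2 a b c d h)
    rw [Finset.sum_const_zero] at hsum
    refine hsum.congr' ?_
    filter_upwards [eventually_gt_atTop 0] with y hy
    let τ : ℍ := ⟨y * Complex.I, by simpa using hy⟩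
    change _ = slash2k k a b c d (Sop p n M k r A f) τ
    rw [slash2k_eq_slash_toSL2 k h, Sop_comp_coe hp hr1 hr2 hA hf, SlashAction.sum_slash,
      Finset.sum_apply]
    simp_rw [← SlashAction.slash_mul, ← slash2k_eq_slash]
    rfl

lemma Sop_eq_pow_mul (hp : p.Prime) (hr1 : 1 ≤ r) (hr2 : r ≤ n) (hA : TopRowsDetOne p n M r A)
    (hf : IsCuspForm (p ^ r * M) k f) {z : ℂ} (hz : z ∈ UHP) :
    Sop p n M k r A f z = (p : ℂ) ^ (n - r) * f z := by
  have hfn := hf.mono (mul_dvd_mul_right (pow_dvd_pow p hr2) M)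
  have := congrFun (Sop_comp_coe hp hr1 hr2 hA hfn) ⟨z, hz⟩
  rw [Finset.sum_apply, Finset.sum_congr rfl fun x hx =>
    congrFun (hf.slash_eq (cosetRep_mem_Gamma0 hp hA hx)) _, Finset.sum_const,
    card_cosetIndex hp hr2, nsmul_eq_mul] at this
  exact_mod_cast this

end Sop

theorem stmt18_general (p n M k r : ℕ) (hp : p.Prime) (hpM : ¬ p ∣ M)
    (hr1 : 1 ≤ r) (hr2 : r ≤ n)
    (A : ℕ → ℕ → ℤ × ℤ)
    (hA : ∀ j s : ℕ, r ≤ j → j ≤ n - 1 → s < p ^ (n - j) → ¬ p ∣ s →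
      (A j s).1 * ((p : ℤ) ^ (n - j) - s * M) - (A j s).2 * ((p : ℤ) ^ j * M) = 1) :
    (∀ f : ℂ → ℂ, IsCuspForm (p ^ n * M) k f →
      IsCuspForm (p ^ r * M) k (Sop p n M k r A f)) ∧
    (∀ f : ℂ → ℂ, IsCuspForm (p ^ n * M) k f →
      ∀ z ∈ UHP, Sop p n M k r A (Sop p n M k r A f) z =
        (p : ℂ) ^ (n - r) * Sop p n M k r A f z) ∧
    (∀ f : ℂ → ℂ, IsCuspForm (p ^ n * M) k f →
      ((∀ z ∈ UHP, Sop p n M k r A f z = (p : ℂ) ^ (n - r) * f z) ↔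
        IsCuspForm (p ^ r * M) k f)) := by
  have hSop : ∀ f, IsCuspForm (p ^ n * M) k f → IsCuspForm (p ^ r * M) k (Sop p n M k r A f) :=
    fun f => isCuspForm_Sop hp hpM hr1 hr2 hA
  refine ⟨hSop, fun f hf z hz => Sop_eq_pow_mul hp hr1 hr2 hA (hSop f hf) hz,
    fun f hf => ⟨fun hf' => ?_, fun hf' z hz => Sop_eq_pow_mul hp hr1 hr2 hA hf' hz⟩⟩
  refine ((hSop f hf).const_mul ((p : ℂ) ^ (n - r))⁻¹).congr (funext fun τ => ?_)
  rw [Function.comp_apply, Function.comp_apply, hf' τ τ.2,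
    inv_mul_cancel_left₀ (pow_ne_zero _ (Nat.cast_ne_zero.mpr hp.ne_zero))]

/-- With `N = pⁿM`, `p ∤ M`, `n ≥ 2`, `1 ≤ r ≤ n`: `S_{pⁿ,r}` maps
`S_{2k}(Γ₀(N))` into `S_{2k}(Γ₀(p^r M))`, satisfies
`S_{pⁿ,r}(S_{pⁿ,r} - p^{n-r}) = 0`, and its `p^{n-r}`-eigenspace is exactly
`S_{2k}(Γ₀(p^r M))`. -/
theorem stmt18 (p n M k r : ℕ) (hp : p.Prime) (hpM : ¬ p ∣ M) (hM : 0 < M)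
    (hk : 1 ≤ k) (hn : 2 ≤ n) (hr1 : 1 ≤ r) (hr2 : r ≤ n)
    (A : ℕ → ℕ → ℤ × ℤ)
    (hA : ∀ j s : ℕ, r ≤ j → j ≤ n - 1 → s < p ^ (n - j) → ¬ p ∣ s →
      (A j s).1 * ((p : ℤ) ^ (n - j) - s * M) - (A j s).2 * ((p : ℤ) ^ j * M) = 1) :
    (∀ f : ℂ → ℂ, IsCuspForm (p ^ n * M) k f →
      IsCuspForm (p ^ r * M) k (Sop p n M k r A f)) ∧
    (∀ f : ℂ → ℂ, IsCuspForm (p ^ n * M) k f →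
      ∀ z ∈ UHP, Sop p n M k r A (Sop p n M k r A f) z =
        (p : ℂ) ^ (n - r) * Sop p n M k r A f z) ∧
    (∀ f : ℂ → ℂ, IsCuspForm (p ^ n * M) k f →
      ((∀ z ∈ UHP, Sop p n M k r A f z = (p : ℂ) ^ (n - r) * f z) ↔
        IsCuspForm (p ^ r * M) k f)) :=
  stmt18_general p n M k r hp hpM hr1 hr2 A hA
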